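/- Equivalence of λ•→ and its syntax-directed variant (λ•→)⁻: a judgement Γ ⊢ e : t is derivable in (λ•→)⁻ if and only if it is derivable in λ•→. -/

import Mathlib

namespace LambdaBullet

/-- Head constructors for pseudo-types. -/
inductive TyHead : Type
  | var (n : ℕ)
  | nat
  | prod
  | arrow
  | bullet

/-- Arity of each pseudo-type constructor. -/
def tyArity : TyHead → Type
  | .var _ => Empty
  | .nat => Empty
  | .prod => Bool
  | .arrow => Bool
  | .bullet => Unit

/-- The polynomial functor whose M-type is the type of pseudo-types. -/
def TyP : PFunctor := ⟨TyHead, tyArity⟩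

/-- Pseudo-types: possibly infinite coinductively generated trees. -/
abbrev PseudoType := TyP.M

/-- Type variable. -/
def tvar (n : ℕ) : PseudoType := PFunctor.M.mk ⟨TyHead.var n, Empty.elim⟩
/-- The type `Nat`. -/
def tnat : PseudoType := PFunctor.M.mk ⟨TyHead.nat, Empty.elim⟩
/-- Product type. -/
def tprod (t s : PseudoType) : PseudoType :=
  PFunctor.M.mk ⟨TyHead.prod, fun b => bif b then s else t⟩
/-- Arrow type. -/
def tarrow (t s : PseudoType) : PseudoType :=
  PFunctor.M.mk ⟨TyHead.arrow, fun b => bif b then s else t⟩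
/-- Delay type `•t`. -/
def tbullet (t : PseudoType) : PseudoType :=
  PFunctor.M.mk ⟨TyHead.bullet, fun _ => t⟩
/-- Iterated delay `•ⁿ t`. -/
def tbulletN (n : ℕ) (t : PseudoType) : PseudoType := tbullet^[n] t

/-- `Child t s` holds iff `s` is an immediate subtree of `t`. -/
def Child (t s : PseudoType) : Prop := ∃ b : TyP.B t.dest.1, t.dest.2 b = s

/-- `Subtree t s` holds iff `s` is a subtree of `t`. -/
def Subtree (t s : PseudoType) : Prop := Relation.ReflTransGen Child t s

/-- A pseudo-type is regular if it has finitely many distinct subtrees. -/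
def Regular (t : PseudoType) : Prop := {s | Subtree t s}.Finite

/-- The root of the tree is a `•`. -/
def headIsBullet (t : PseudoType) : Prop := t.dest.1 = TyHead.bullet

/-- A pseudo-type is guarded if every infinite path in its tree has
infinitely many `•`'s. -/
def Guarded (t : PseudoType) : Prop :=
  ∀ f : ℕ → PseudoType, f 0 = t → (∀ n, Child (f n) (f (n + 1))) →
    ∀ N, ∃ n, N ≤ n ∧ headIsBullet (f n)

/-- A type is a regular and guarded pseudo-type. -/
def IsType (t : PseudoType) : Prop := Regular t ∧ Guarded t

/-- `•^∞`: the unique pseudo-type satisfying `•^∞ = • •^∞`. -/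
def binf : PseudoType := PFunctor.M.corec (fun _ : Unit => ⟨TyHead.bullet, fun _ => ()⟩) ()

/-- Constants. -/
inductive Const : Type
  | pair
  | cfst
  | csnd
  | zero
  | succ

/-- Expressions (with de Bruijn indices for variables). -/
inductive Expr : Type
  | var (x : ℕ)
  | const (k : Const)
  | lam (e : Expr)
  | app (e₁ e₂ : Expr)

def liftRen (f : ℕ → ℕ) : ℕ → ℕ
  | 0 => 0
  | n + 1 => f n + 1

def rename (f : ℕ → ℕ) : Expr → Expr
  | .var n => .var (f n)
  | .const k => .const k
  | .lam e => .lam (rename (liftRen f) e)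
  | .app a b => .app (rename f a) (rename f b)

def liftSub (ρ : ℕ → Expr) : ℕ → Expr
  | 0 => .var 0
  | n + 1 => rename Nat.succ (ρ n)

/-- Simultaneous (capture-avoiding) substitution. -/
def substE (ρ : ℕ → Expr) : Expr → Expr
  | .var n => ρ n
  | .const k => .const k
  | .lam e => .lam (substE (liftSub ρ) e)
  | .app a b => .app (substE ρ a) (substE ρ b)

/-- `subst0 e f` is `e[f/x]` for the topmost variable `x`. -/
def subst0 (e f : Expr) : Expr :=
  substE (fun n => match n with | 0 => f | n + 1 => .var n) e

/-- The pair `⟨e₁, e₂⟩`. -/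
def mkPair (e₁ e₂ : Expr) : Expr := .app (.app (.const .pair) e₁) e₂

/-- Evaluation contexts E ::= [] | E e | fst E | snd E | succ E. -/
inductive ECtx : Type
  | hole
  | app (E : ECtx) (e : Expr)
  | fst (E : ECtx)
  | snd (E : ECtx)
  | succ (E : ECtx)

/-- Plugging an expression into an evaluation context. -/
def ECtx.plug : ECtx → Expr → Expr
  | .hole, e => e
  | .app E f, e => .app (E.plug e) f
  | .fst E, e => .app (.const .cfst) (E.plug e)
  | .snd E, e => .app (.const .csnd) (E.plug e)
  | .succ E, e => .app (.const .succ) (E.plug e)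

/-- Head reduction rules. -/
inductive HeadRed : Expr → Expr → Prop
  | beta (e f) : HeadRed (.app (.lam e) f) (subst0 e f)
  | fst (e₁ e₂) : HeadRed (.app (.const .cfst) (mkPair e₁ e₂)) e₁
  | snd (e₁ e₂) : HeadRed (.app (.const .csnd) (mkPair e₁ e₂)) e₂

/-- Weak head (call-by-name) reduction: head rules closed under evaluation contexts. -/
def Red (a b : Expr) : Prop :=
  ∃ (E : ECtx) (e f : Expr), HeadRed e f ∧ a = E.plug e ∧ b = E.plug f

/-- Many-step reduction. -/
def RedStar : Expr → Expr → Prop := Relation.ReflTransGen Red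

/-- (Weak head) normal forms. -/
def NormalForm (e : Expr) : Prop := ∀ f, ¬ Red e f

/-- Typing contexts: finite maps from (de Bruijn) variables to types. -/
def Ctx : Type := ℕ → Option PseudoType

/-- Extending a typing context with a type for the topmost variable. -/
def Ctx.cons (t : PseudoType) (Γ : Ctx) : Ctx :=
  fun n => match n with | 0 => some t | n + 1 => Γ n

/-- The type assignment κ for constants. -/
inductive KappaTy : Const → PseudoType → Prop
  | pair {t s} : IsType t → IsType s →
      KappaTy .pair (tarrow t (tarrow s (tprod t s)))
  | fst {t s} : IsType t → IsType s →
      KappaTy .cfst (tarrow (tprod t s) t)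
  | snd {t s} : IsType t → IsType s →
      KappaTy .csnd (tarrow (tprod t s) s)
  | zero : KappaTy .zero tnat
  | succ : KappaTy .succ (tarrow tnat tnat)

/-- The type assignment system λ•→. -/
inductive Types : Ctx → Expr → PseudoType → Prop
  | ax {Γ x t} : Γ x = some t → IsType t → Types Γ (.var x) t
  | const {Γ k t} : KappaTy k t → Types Γ (.const k) t
  | bulletI {Γ e t} : Types Γ e t → Types Γ e (tbullet t)
  | arrowI {Γ e n t s} :
      Types (Ctx.cons (tbulletN n t) Γ) e (tbulletN n s) →
      Types Γ (.lam e) (tbulletN n (tarrow t s))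
  | arrowE {Γ e₁ e₂ n t s} :
      Types Γ e₁ (tbulletN n (tarrow t s)) → Types Γ e₂ (tbulletN n t) →
      Types Γ (.app e₁ e₂) (tbulletN n s)


/-- The syntax-directed type assignment system (λ•→)⁻: the rule (•I) is
removed and the `•`'s are introduced in the rules (axiom) and (const). -/
inductive TypesSD : Ctx → Expr → PseudoType → Prop
  | ax {Γ x t} (n : ℕ) : Γ x = some t → IsType t →
      TypesSD Γ (.var x) (tbulletN n t)
  | const {Γ k t} (n : ℕ) : KappaTy k t →
      TypesSD Γ (.const k) (tbulletN n t)
  | arrowI {Γ e n t s} :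
      TypesSD (Ctx.cons (tbulletN n t) Γ) e (tbulletN n s) →
      TypesSD Γ (.lam e) (tbulletN n (tarrow t s))
  | arrowE {Γ e₁ e₂ n t s} :
      TypesSD Γ e₁ (tbulletN n (tarrow t s)) → TypesSD Γ e₂ (tbulletN n t) →
      TypesSD Γ (.app e₁ e₂) (tbulletN n s)

/-!
A (λ•→)⁻ derivation becomes a λ•→ derivation by unfolding the •'s added at its leaves into
uses of (•I). Conversely, it suffices that (•I) is admissible in (λ•→)⁻. Delaying a derivation
also delays the types of the variables bound by (→I), and a variable of type `•t` cannot be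
used at type `t`. One therefore shows more generally that a derivation of `Γ ⊢ e : t` yields
`Δ ⊢ e : •ᵏt` as soon as, for every variable, `•ᵏ` of its type in `Γ` is some `•ʲs` with `s`
its type in `Δ`: the •'s are pushed through (→I) and (→E), whose premises are delayed together
with their conclusion, and absorbed at the leaves.
-/

lemma tbulletN_tbulletN (m n : ℕ) (t : PseudoType) :
    tbulletN m (tbulletN n t) = tbulletN (m + n) t :=
  (Function.iterate_add_apply tbullet m n t).symm

lemma tbulletN_succ (n : ℕ) (t : PseudoType) : tbulletN (n + 1) t = tbullet (tbulletN n t) :=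
  Function.iterate_succ_apply' tbullet n t

lemma child_tbullet_iff {t s : PseudoType} : Child (tbullet t) s ↔ s = t := by
  unfold Child tbullet
  erw [PFunctor.M.dest_mk]
  exact ⟨fun ⟨_, h⟩ => h.symm, fun h => ⟨(), h.symm⟩⟩

lemma headIsBullet_tbullet (t : PseudoType) : headIsBullet (tbullet t) := by
  unfold headIsBullet tbullet
  erw [PFunctor.M.dest_mk]

lemma Regular.tbullet {t : PseudoType} (h : Regular t) : Regular (tbullet t) := by
  refine (h.insert (LambdaBullet.tbullet t)).subset fun s hs => ?_
  rcases Relation.ReflTransGen.cases_head hs with rfl | ⟨c, hc, hcs⟩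
  · exact Set.mem_insert _ _
  · exact Set.mem_insert_of_mem _ (child_tbullet_iff.mp hc ▸ hcs)

lemma Guarded.tbullet {t : PseudoType} (h : Guarded t) : Guarded (tbullet t) := by
  intro f hf0 hstep N
  cases N with
  | zero => exact ⟨0, le_rfl, hf0 ▸ headIsBullet_tbullet t⟩
  | succ N =>
    have hf1 : f 1 = t := child_tbullet_iff.mp (hf0 ▸ hstep 0)
    obtain ⟨n, hn, hb⟩ := h (fun n => f (n + 1)) hf1 (fun n => hstep (n + 1)) N
    exact ⟨n + 1, Nat.succ_le_succ hn, hb⟩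

lemma IsType.tbulletN {t : PseudoType} (h : IsType t) (n : ℕ) : IsType (tbulletN n t) := by
  induction n with
  | zero => exact h
  | succ n ih => rw [tbulletN_succ]; exact ⟨ih.1.tbullet, ih.2.tbullet⟩

lemma Types.tbulletN {Γ : Ctx} {e : Expr} {t : PseudoType} (h : Types Γ e t) (n : ℕ) :
    Types Γ e (tbulletN n t) := by
  induction n with
  | zero => exact h
  | succ n ih => rw [tbulletN_succ]; exact ih.bulletI

theorem TypesSD.toTypes {Γ : Ctx} {e : Expr} {t : PseudoType} (h : TypesSD Γ e t) :
    Types Γ e t := by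
  induction h with
  | ax n hx ht => exact (Types.ax hx ht).tbulletN n
  | const n hk => exact (Types.const hk).tbulletN n
  | arrowI _ ih => exact ih.arrowI
  | arrowE _ _ ih₁ ih₂ => exact ih₁.arrowE ih₂

theorem TypesSD.delay {Γ : Ctx} {e : Expr} {t : PseudoType} (h : TypesSD Γ e t) (k : ℕ)
    {Δ : Ctx} (hΔ : ∀ x u, Γ x = some u →
      ∃ s j, Δ x = some s ∧ (IsType u → IsType s) ∧ tbulletN k u = tbulletN j s) :
    TypesSD Δ e (tbulletN k t) := by
  induction h generalizing Δ with
  | @ax Γ x u n hx hu =>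
    obtain ⟨s, j, hs, hsu, hkj⟩ := hΔ x u hx
    have hdelay : tbulletN k (tbulletN n u) = tbulletN n (tbulletN j s) := by
      rw [tbulletN_tbulletN, add_comm, ← tbulletN_tbulletN, hkj]
    rw [hdelay, tbulletN_tbulletN]
    exact .ax _ hs (hsu hu)
  | const n hk =>
    rw [tbulletN_tbulletN]
    exact .const _ hk
  | @arrowI Γ e n t s _ ih =>
    rw [tbulletN_tbulletN] at ih ⊢
    refine .arrowI (ih fun x u hx => ?_)
    cases x with
    | zero =>
      cases hx
      exact ⟨_, 0, rfl, fun ht => tbulletN_tbulletN k n t ▸ ht.tbulletN k, tbulletN_tbulletN k n t⟩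
    | succ x => exact hΔ x u hx
  | arrowE _ _ ih₁ ih₂ =>
    rw [tbulletN_tbulletN] at ih₁ ih₂ ⊢
    exact .arrowE (ih₁ hΔ) (ih₂ hΔ)

theorem TypesSD.bulletI {Γ : Ctx} {e : Expr} {t : PseudoType} (h : TypesSD Γ e t) :
    TypesSD Γ e (tbullet t) :=
  h.delay 1 fun _ u hx => ⟨u, 1, hx, id, rfl⟩

theorem Types.toTypesSD {Γ : Ctx} {e : Expr} {t : PseudoType} (h : Types Γ e t) :
    TypesSD Γ e t := by
  induction h with
  | ax hx ht => exact .ax 0 hx ht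
  | const hk => exact .const 0 hk
  | bulletI _ ih => exact ih.bulletI
  | arrowI _ ih => exact ih.arrowI
  | arrowE _ _ ih₁ ih₂ => exact ih₁.arrowE ih₂

/-- Equivalence of λ•→ and (λ•→)⁻: `Γ ⊢ e : t` is derivable
in (λ•→)⁻ iff it is derivable in λ•→. -/
theorem sd_equivalence (Γ : Ctx) (e : Expr) (t : PseudoType) :
    TypesSD Γ e t ↔ Types Γ e t :=
  ⟨TypesSD.toTypes, Types.toTypesSD⟩

end LambdaBullet
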